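/- arXiv:0803.0371 — 5 statements merged into one kernel-verified Lean document; each statement's English description precedes it below -/
import Mathlib

section
/- For any invertible 2×2 real matrix D and any 3×2 real matrices A, B, the pairing A × B := c₁(A) × c₁(B) + c₂(A) × c₂(B) satisfies (A D⁻¹) × (B Dᵀ) = A × B. -/
/-!
By bilinearity of the cross product, `∑ₖ (A M)ₖ × (B N)ₖ = ∑ᵢⱼ (M Nᵀ)ᵢⱼ Aᵢ × Bⱼ` for the columns
`Aᵢ`, `Bⱼ`; with `M = D⁻¹` and `N = Dᵀ` the coefficient matrix `M Nᵀ = D⁻¹ D` is the identity.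
-/

open Matrix

/-- The cross-product pairing `A × B = c₁(A) × c₁(B) + c₂(A) × c₂(B)` of two 3×2 matrices. -/
def matPair (A B : Matrix (Fin 3) (Fin 2) ℝ) : Fin 3 → ℝ :=
  crossProduct (fun r => A r 0) (fun r => B r 0) +
  crossProduct (fun r => A r 1) (fun r => B r 1)

section ColumnCross

variable {R : Type*} [CommRing R] {m n : Type*} [Fintype m]

theorem transpose_mul_apply_eq_sum {l : Type*} (A : Matrix l m R) (M : Matrix m n R) (k : n) :
    (A * M)ᵀ k = ∑ i, M i k • Aᵀ i := by
  ext r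
  simp [mul_apply, Finset.sum_apply, mul_comm]

theorem sum_cross_mul_mul [Fintype n] (A B : Matrix (Fin 3) m R) (M N : Matrix m n R) :
    ∑ k, (A * M)ᵀ k ⨯₃ (B * N)ᵀ k = ∑ i, ∑ j, (M * Nᵀ) i j • Aᵀ i ⨯₃ Bᵀ j := by
  simp only [transpose_mul_apply_eq_sum, map_sum, map_smul, LinearMap.sum_apply,
    LinearMap.smul_apply, mul_apply, transpose_apply, Finset.sum_smul, Finset.smul_sum, mul_smul]
  rw [Finset.sum_comm_cycle]
  simp_rw [Finset.sum_comm (s := (Finset.univ : Finset n)), smul_comm (N _ _)]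

theorem sum_cross_mul_mul_of_mul_transpose_eq_one [Fintype n] [DecidableEq m]
    (A B : Matrix (Fin 3) m R) {M N : Matrix m n R} (h : M * Nᵀ = 1) :
    ∑ k, (A * M)ᵀ k ⨯₃ (B * N)ᵀ k = ∑ i, Aᵀ i ⨯₃ Bᵀ i := by
  rw [sum_cross_mul_mul, h]
  simp [one_apply, ite_smul]

end ColumnCross

theorem matPair_eq_sum (A B : Matrix (Fin 3) (Fin 2) ℝ) :
    matPair A B = ∑ k, Aᵀ k ⨯₃ Bᵀ k := by
  rw [Fin.sum_univ_two]
  rfl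

theorem stmt1 (D : Matrix (Fin 2) (Fin 2) ℝ) (hD : IsUnit D.det)
    (A B : Matrix (Fin 3) (Fin 2) ℝ) :
    matPair (A * D⁻¹) (B * Dᵀ) = matPair A B := by
  have h : D⁻¹ * Dᵀᵀ = 1 := by rw [transpose_transpose, nonsing_inv_mul D hD]
  rw [matPair_eq_sum, matPair_eq_sum, sum_cross_mul_mul_of_mul_transpose_eq_one A B h]
end

section
/- Let α, β, e₁, e₂ ∈ ℝ³ satisfy e₁ × α + e₂ × β = 0, where e₁, e₂ are the first two standard basis vectors, |α| = a, |β| = b, α·β = 0, and a > b > 0. Then α = ±a e₁ and β = ±b e₂. -/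
/-!
Writing out the cross products, `e₁ × α + e₂ × β = 0` says `α 2 = β 2 = 0` and `α 1 = β 0 =: t`.
Orthogonality then reads `t (α 0 + β 1) = 0`. If `t ≠ 0` then `α 0 = -β 1`, so `α` and `β` have
equal length, which `a > b > 0` forbids. Hence `t = 0`, and each of `α`, `β` lies on a single
coordinate axis with the prescribed length.
-/

open Matrix

theorem crossProduct_e₁_add_crossProduct_e₂_eq_zero_iff {R : Type*} [CommRing R]
    (α β : Fin 3 → R) :
    crossProduct ![1, 0, 0] α + crossProduct ![0, 1, 0] β = 0 ↔
      α 2 = 0 ∧ β 2 = 0 ∧ α 1 = β 0 := by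
  constructor
  · intro h
    have hβ : β 2 = 0 := by simpa [cross_apply] using congrFun h 0
    have hα : α 2 = 0 := by simpa [cross_apply] using congrFun h 1
    have hαβ : α 1 + -β 0 = 0 := by simpa [cross_apply] using congrFun h 2
    exact ⟨hα, hβ, by linear_combination hαβ⟩
  · rintro ⟨hα, hβ, hαβ⟩
    ext i
    fin_cases i <;> simp [cross_apply, hα, hβ, hαβ]

theorem eq_zero_of_mul_add_mul_eq_zero_of_sq_add_sq_ne {R : Type*} [CommRing R] [NoZeroDivisors R]
    {x y t : R} (horth : x * t + t * y = 0) (hne : x ^ 2 + t ^ 2 ≠ t ^ 2 + y ^ 2) : t = 0 := by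
  have : t * (x + y) = 0 := by linear_combination horth
  refine (mul_eq_zero.mp this).resolve_right fun hxy => hne ?_
  linear_combination (x - y) * hxy

theorem eq_smul_single_or_eq_neg_of_dotProduct_self {ι : Type*} [Fintype ι] [DecidableEq ι]
    {R : Type*} [CommRing R] [NoZeroDivisors R] {v : ι → R} {a : R} (i : ι)
    (hv : ∀ j ≠ i, v j = 0) (ha : v ⬝ᵥ v = a ^ 2) :
    v = a • Pi.single i 1 ∨ v = -(a • Pi.single i 1) := by
  have hvi : v = v i • Pi.single i 1 := by
    ext j
    by_cases hj : j = i
    · subst hj; simp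
    · simp [hv j hj, hj]
  have hsq : v i ^ 2 = a ^ 2 := by
    rw [← ha, hvi]
    simp [sq]
  rw [hvi]
  rcases sq_eq_sq_iff_eq_or_eq_neg.mp hsq with h | h
  · exact .inl (by rw [h])
  · exact .inr (by rw [h, neg_smul])

theorem stmt6 (a b : ℝ) (hab : a > b) (hb : b > 0) (α β : Fin 3 → ℝ)
    (hα : α ⬝ᵥ α = a ^ 2) (hβ : β ⬝ᵥ β = b ^ 2) (hαβ : α ⬝ᵥ β = 0)
    (heq : crossProduct ![1, 0, 0] α + crossProduct ![0, 1, 0] β = 0) :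
    (α = a • ![1, 0, 0] ∨ α = -(a • ![1, 0, 0])) ∧
    (β = b • ![0, 1, 0] ∨ β = -(b • ![0, 1, 0])) := by
  obtain ⟨hα2, hβ2, hαβ1⟩ := (crossProduct_e₁_add_crossProduct_e₂_eq_zero_iff α β).mp heq
  have hα1 : α 1 = 0 := by
    refine eq_zero_of_mul_add_mul_eq_zero_of_sq_add_sq_ne (x := α 0) (y := β 1) ?_ fun h => ?_
    · simpa [dotProduct, Fin.sum_univ_three, hα2, hβ2, hαβ1] using hαβ
    · have : a ^ 2 = b ^ 2 := by
        rw [← hα, ← hβ]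
        simp only [dotProduct, Fin.sum_univ_three, hα2, hβ2, ← hαβ1]
        linear_combination h
      exact (pow_lt_pow_left₀ hab hb.le two_ne_zero).ne' this
  have he₁ : (![1, 0, 0] : Fin 3 → ℝ) = Pi.single 0 1 := by ext i; fin_cases i <;> simp
  have he₂ : (![0, 1, 0] : Fin 3 → ℝ) = Pi.single 1 1 := by ext i; fin_cases i <;> simp
  rw [he₁, he₂]
  refine ⟨eq_smul_single_or_eq_neg_of_dotProduct_self 0 (fun j hj => ?_) hα,
    eq_smul_single_or_eq_neg_of_dotProduct_self 1 (fun j hj => ?_) hβ⟩ <;>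
    fin_cases j <;> simp_all
end

section
/- The functions φ(t) solving I₃ φ̈ = −(a ± b) sin φ give rise to solutions of the full Euler–Poisson equations via ω = φ̇ e₃, α = a(e₁ cos φ − e₂ sin φ), β = ± b(e₁ sin φ + e₂ cos φ): i.e., these formulas satisfy ẇ = M × ω + e₁ × α + e₂ × β-type equations with M = I ω + λ e₃, I = diag(I₁, I₂, I₃), and satisfy α̇ = α × ω, β̇ = β × ω. -/
/-! Both ω and M are vertical, so M × ω = 0, while α and β are horizontal vectors turning about e₃
at rate φ̇, which gives the Poisson equations. The torque e₁ × α + e₂ × β is vertical too, and the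
third component of the Euler equation is the pendulum equation I₃ φ̈ = -(a + ε b) sin φ. -/

theorem hasDerivAt_vec3 {x y z : ℝ → ℝ} {x' y' z' t : ℝ} (hx : HasDerivAt x x' t)
    (hy : HasDerivAt y y' t) (hz : HasDerivAt z z' t) :
    HasDerivAt (fun s => ![x s, y s, z s]) ![x', y', z'] t :=
  hasDerivAt_pi.2 fun i => by fin_cases i <;> assumption

theorem hasDerivAt_horizontal_eq_cross {x y : ℝ → ℝ} {w t : ℝ}
    (hx : HasDerivAt x (y t * w) t) (hy : HasDerivAt y (-(x t * w)) t) :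
    HasDerivAt (fun s => ![x s, y s, 0]) (crossProduct ![x t, y t, 0] ![0, 0, w]) t := by
  convert hasDerivAt_vec3 hx hy (hasDerivAt_const t 0) using 1
  simp [cross_apply]

theorem vertical_cross_vertical_add_basis_cross_horizontal (m w x y u v : ℝ) :
    crossProduct ![0, 0, m] ![0, 0, w] + crossProduct ![1, 0, 0] ![x, y, 0] +
      crossProduct ![0, 1, 0] ![u, v, 0] = ![0, 0, y - u] := by
  simp [cross_apply, sub_eq_add_neg]

theorem stmt9_general (I₁ I₂ I₃ a b lam ε : ℝ) (hI₃ : I₃ ≠ 0)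
    (φ φ' : ℝ → ℝ)
    (hφ : ∀ t, HasDerivAt φ (φ' t) t)
    (hφ' : ∀ t, HasDerivAt φ' (-((a + ε * b) / I₃) * Real.sin (φ t)) t)
    (ω α β M : ℝ → Fin 3 → ℝ)
    (hω : ∀ t, ω t = ![0, 0, φ' t])
    (hα : ∀ t, α t = ![a * Real.cos (φ t), -(a * Real.sin (φ t)), 0])
    (hβ : ∀ t, β t = ![ε * b * Real.sin (φ t), ε * b * Real.cos (φ t), 0])
    (hM : ∀ t, M t = ![I₁ * ω t 0, I₂ * ω t 1, I₃ * ω t 2 + lam]) :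
    (∀ t i, HasDerivAt (fun s => M s i)
      ((crossProduct (M t) (ω t) + crossProduct ![1, 0, 0] (α t) +
        crossProduct ![0, 1, 0] (β t)) i) t) ∧
    (∀ t i, HasDerivAt (fun s => α s i) (crossProduct (α t) (ω t) i) t) ∧
    (∀ t i, HasDerivAt (fun s => β s i) (crossProduct (β t) (ω t) i) t) := by
  have hM_vertical : ∀ t, M t = ![0, 0, I₃ * φ' t + lam] := fun t => by simp [hM, hω]
  have hα_deriv (t : ℝ) : HasDerivAt α (crossProduct (α t) (ω t)) t := by
    rw [hα, hω, funext hα]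
    exact hasDerivAt_horizontal_eq_cross (((hφ t).cos.const_mul a).congr_deriv (by ring))
      (((hφ t).sin.const_mul a).neg.congr_deriv (by ring))
  have hβ_deriv (t : ℝ) : HasDerivAt β (crossProduct (β t) (ω t)) t := by
    rw [hβ, hω, funext hβ]
    exact hasDerivAt_horizontal_eq_cross (((hφ t).sin.const_mul (ε * b)).congr_deriv (by ring))
      (((hφ t).cos.const_mul (ε * b)).congr_deriv (by ring))
  have hM_deriv (t : ℝ) :
      HasDerivAt M (crossProduct (M t) (ω t) + crossProduct ![1, 0, 0] (α t) +
        crossProduct ![0, 1, 0] (β t)) t := by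
    rw [hM_vertical, hω, hα, hβ, funext hM_vertical,
      vertical_cross_vertical_add_basis_cross_horizontal]
    refine hasDerivAt_vec3 (hasDerivAt_const t 0) (hasDerivAt_const t 0)
      ((((hφ' t).const_mul I₃).add_const lam).congr_deriv ?_)
    field_simp
    ring
  exact ⟨fun t => hasDerivAt_pi.1 (hM_deriv t), fun t => hasDerivAt_pi.1 (hα_deriv t),
    fun t => hasDerivAt_pi.1 (hβ_deriv t)⟩

theorem stmt9 (I₁ I₂ I₃ a b lam ε : ℝ) (hI₃ : I₃ ≠ 0) (hε : ε = 1 ∨ ε = -1)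
    (φ φ' : ℝ → ℝ)
    (hφ : ∀ t, HasDerivAt φ (φ' t) t)
    (hφ' : ∀ t, HasDerivAt φ' (-((a + ε * b) / I₃) * Real.sin (φ t)) t)
    (ω α β M : ℝ → Fin 3 → ℝ)
    (hω : ∀ t, ω t = ![0, 0, φ' t])
    (hα : ∀ t, α t = ![a * Real.cos (φ t), -(a * Real.sin (φ t)), 0])
    (hβ : ∀ t, β t = ![ε * b * Real.sin (φ t), ε * b * Real.cos (φ t), 0])
    (hM : ∀ t, M t = ![I₁ * ω t 0, I₂ * ω t 1, I₃ * ω t 2 + lam]) :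
    (∀ t i, HasDerivAt (fun s => M s i)
      ((crossProduct (M t) (ω t) + crossProduct ![1, 0, 0] (α t) +
        crossProduct ![0, 1, 0] (β t)) i) t) ∧
    (∀ t i, HasDerivAt (fun s => α s i) (crossProduct (α t) (ω t) i) t) ∧
    (∀ t i, HasDerivAt (fun s => β s i) (crossProduct (β t) (ω t) i) t) :=
  stmt9_general I₁ I₂ I₃ a b lam ε hI₃ φ φ' hφ hφ' ω α β M hω hα hβ hM
end

section
/- The generalized Kowalevski integral K = (ω₁² − ω₂² + α₁ − β₂)² + (2ω₁ω₂ + α₂ + β₁)² + 2λ[(ω₃−λ)(ω₁² + ω₂²) + 2ω₁α₃ + 2ω₂β₃] is a first integral of the Kowalevski gyrostat equations in two constant fields. -/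
/-!
In the complex variables `z = ω₁ + i ω₂` and `ξ = z² + (α₁ - β₂) + i (α₂ + β₁)` the equations give
`ξ' = -i ω₃ ξ + i λ z²`. Without the gyrostat term (`λ = 0`) this is Kowalevski's relation
`ξ' = -i ω₃ ξ`, so `|ξ|²` is conserved; for `λ ≠ 0` the defect `2 Re (i λ conj ξ z²)` of `|ξ|²'`
is exactly `-2λ` times the derivative of `(ω₃ - λ)|z|² + 2 ω₁ α₃ + 2 ω₂ β₃`.
-/

section KowalevskiGyrostat

variable {lam : ℝ} {ω₁ ω₂ ω₃ α₁ α₂ α₃ β₁ β₂ β₃ : ℝ → ℝ} {t : ℝ}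

theorem hasDerivAt_kowalevski_re
    (h1 : HasDerivAt ω₁ ((ω₂ t * (ω₃ t - lam) + β₃ t) / 2) t)
    (h2 : HasDerivAt ω₂ ((-(ω₁ t * (ω₃ t - lam)) - α₃ t) / 2) t)
    (h4 : HasDerivAt α₁ (α₂ t * ω₃ t - α₃ t * ω₂ t) t)
    (h8 : HasDerivAt β₂ (β₃ t * ω₁ t - β₁ t * ω₃ t) t) :
    HasDerivAt (fun t => ω₁ t ^ 2 - ω₂ t ^ 2 + α₁ t - β₂ t)
      (ω₃ t * (2 * ω₁ t * ω₂ t + α₂ t + β₁ t) - 2 * lam * ω₁ t * ω₂ t) t :=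
  ((((h1.pow 2).sub (h2.pow 2)).add h4).sub h8).congr_deriv (by ring)

theorem hasDerivAt_kowalevski_im
    (h1 : HasDerivAt ω₁ ((ω₂ t * (ω₃ t - lam) + β₃ t) / 2) t)
    (h2 : HasDerivAt ω₂ ((-(ω₁ t * (ω₃ t - lam)) - α₃ t) / 2) t)
    (h5 : HasDerivAt α₂ (α₃ t * ω₁ t - α₁ t * ω₃ t) t)
    (h7 : HasDerivAt β₁ (β₂ t * ω₃ t - β₃ t * ω₂ t) t) :
    HasDerivAt (fun t => 2 * ω₁ t * ω₂ t + α₂ t + β₁ t)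
      (-(ω₃ t * (ω₁ t ^ 2 - ω₂ t ^ 2 + α₁ t - β₂ t)) + lam * (ω₁ t ^ 2 - ω₂ t ^ 2)) t :=
  ((((h1.const_mul 2).mul h2).add h5).add h7).congr_deriv (by ring)

theorem hasDerivAt_gyrostat_term
    (h1 : HasDerivAt ω₁ ((ω₂ t * (ω₃ t - lam) + β₃ t) / 2) t)
    (h2 : HasDerivAt ω₂ ((-(ω₁ t * (ω₃ t - lam)) - α₃ t) / 2) t)
    (h3 : HasDerivAt ω₃ (α₂ t - β₁ t) t)
    (h6 : HasDerivAt α₃ (α₁ t * ω₂ t - α₂ t * ω₁ t) t)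
    (h9 : HasDerivAt β₃ (β₁ t * ω₂ t - β₂ t * ω₁ t) t) :
    HasDerivAt
      (fun t => (ω₃ t - lam) * (ω₁ t ^ 2 + ω₂ t ^ 2) + 2 * ω₁ t * α₃ t + 2 * ω₂ t * β₃ t)
      (2 * ω₁ t * ω₂ t * (ω₁ t ^ 2 - ω₂ t ^ 2 + α₁ t - β₂ t) -
        (ω₁ t ^ 2 - ω₂ t ^ 2) * (2 * ω₁ t * ω₂ t + α₂ t + β₁ t)) t :=
  ((((h3.sub_const lam).mul ((h1.pow 2).add (h2.pow 2))).add ((h1.const_mul 2).mul h6)).add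
    ((h2.const_mul 2).mul h9)).congr_deriv (by simp only [Pi.add_apply, Pi.pow_apply]; ring)

end KowalevskiGyrostat

theorem stmt11 (lam : ℝ) (ω₁ ω₂ ω₃ α₁ α₂ α₃ β₁ β₂ β₃ : ℝ → ℝ)
    (h1 : ∀ t, HasDerivAt ω₁ ((ω₂ t * (ω₃ t - lam) + β₃ t) / 2) t)
    (h2 : ∀ t, HasDerivAt ω₂ ((-(ω₁ t * (ω₃ t - lam)) - α₃ t) / 2) t)
    (h3 : ∀ t, HasDerivAt ω₃ (α₂ t - β₁ t) t)
    (h4 : ∀ t, HasDerivAt α₁ (α₂ t * ω₃ t - α₃ t * ω₂ t) t)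
    (h5 : ∀ t, HasDerivAt α₂ (α₃ t * ω₁ t - α₁ t * ω₃ t) t)
    (h6 : ∀ t, HasDerivAt α₃ (α₁ t * ω₂ t - α₂ t * ω₁ t) t)
    (h7 : ∀ t, HasDerivAt β₁ (β₂ t * ω₃ t - β₃ t * ω₂ t) t)
    (h8 : ∀ t, HasDerivAt β₂ (β₃ t * ω₁ t - β₁ t * ω₃ t) t)
    (h9 : ∀ t, HasDerivAt β₃ (β₁ t * ω₂ t - β₂ t * ω₁ t) t) :
    ∀ t, HasDerivAt
      (fun t => (ω₁ t ^ 2 - ω₂ t ^ 2 + α₁ t - β₂ t) ^ 2 +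
        (2 * ω₁ t * ω₂ t + α₂ t + β₁ t) ^ 2 +
        2 * lam * ((ω₃ t - lam) * (ω₁ t ^ 2 + ω₂ t ^ 2) +
          2 * ω₁ t * α₃ t + 2 * ω₂ t * β₃ t)) 0 t := by
  intro t
  have hRe := hasDerivAt_kowalevski_re (h1 t) (h2 t) (h4 t) (h8 t)
  have hIm := hasDerivAt_kowalevski_im (h1 t) (h2 t) (h5 t) (h7 t)
  have hGyro := hasDerivAt_gyrostat_term (h1 t) (h2 t) (h3 t) (h6 t) (h9 t)
  exact (((hRe.pow 2).add (hIm.pow 2)).add (hGyro.const_mul (2 * lam))).congr_deriv (by ring)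
end

section
/- The function G = (1/4)(M_α² + M_β²) + (1/2)(ω₃ − λ) M_γ − b² α₁ − a² β₂, where M_α = (Iω + λe₃)·α, M_β = (Iω + λe₃)·β, M_γ = (Iω + λe₃)·(α × β) with I = diag(2,2,1), is a first integral of the Kowalevski gyrostat equations in two constant fields restricted to the level set |α|² = a², |β|² = b², α·β = 0. -/
/-!
Write `m = Iω + λe₃` and `τ = e₁ × α + e₂ × β`, so that the equations read `I ω̇ = m × ω + τ` and
`ẋ = x × ω` for `x = α, β`, hence also for `x = α × β` (Jacobi identity). For every such `x` the
gyroscopic terms cancel in `d/dt (m · x)`, leaving `τ · x`. With these three derivatives, `dG/dt`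
becomes a polynomial that lies in the ideal generated by the constraints `|α|² - a²`, `|β|² - b²`,
`α · β`.
-/

/-- `(Iω + λe₃) · x` for `I = diag(2, 2, 1)`. -/
def gyrostatMoment (lam w₁ w₂ w₃ x₁ x₂ x₃ : ℝ) : ℝ :=
  2 * w₁ * x₁ + 2 * w₂ * x₂ + (w₃ + lam) * x₃

/-- `ẋ = x × ω` at time `t`: `x` is fixed in space, seen from the body frame. -/
def PoissonEqAt (ω₁ ω₂ ω₃ x₁ x₂ x₃ : ℝ → ℝ) (t : ℝ) : Prop :=
  HasDerivAt x₁ (x₂ t * ω₃ t - x₃ t * ω₂ t) t ∧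
  HasDerivAt x₂ (x₃ t * ω₁ t - x₁ t * ω₃ t) t ∧
  HasDerivAt x₃ (x₁ t * ω₂ t - x₂ t * ω₁ t) t

namespace PoissonEqAt

variable {ω₁ ω₂ ω₃ x₁ x₂ x₃ y₁ y₂ y₃ : ℝ → ℝ} {t : ℝ}

theorem cross (hx : PoissonEqAt ω₁ ω₂ ω₃ x₁ x₂ x₃ t) (hy : PoissonEqAt ω₁ ω₂ ω₃ y₁ y₂ y₃ t) :
    PoissonEqAt ω₁ ω₂ ω₃
      (fun s => x₂ s * y₃ s - x₃ s * y₂ s)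
      (fun s => x₃ s * y₁ s - x₁ s * y₃ s)
      (fun s => x₁ s * y₂ s - x₂ s * y₁ s) t := by
  obtain ⟨hx₁, hx₂, hx₃⟩ := hx
  obtain ⟨hy₁, hy₂, hy₃⟩ := hy
  refine ⟨?_, ?_, ?_⟩
  · exact ((hx₂.mul hy₃).sub (hx₃.mul hy₂)).congr_deriv (by ring)
  · exact ((hx₃.mul hy₁).sub (hx₁.mul hy₃)).congr_deriv (by ring)
  · exact ((hx₁.mul hy₂).sub (hx₂.mul hy₁)).congr_deriv (by ring)

theorem hasDerivAt_gyrostatMoment (hx : PoissonEqAt ω₁ ω₂ ω₃ x₁ x₂ x₃ t) {lam τ₁ τ₂ τ₃ : ℝ}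
    (hω₁ : HasDerivAt ω₁ ((ω₂ t * (ω₃ t - lam) + τ₁) / 2) t)
    (hω₂ : HasDerivAt ω₂ ((-(ω₁ t * (ω₃ t - lam)) + τ₂) / 2) t)
    (hω₃ : HasDerivAt ω₃ τ₃ t) :
    HasDerivAt (fun s => gyrostatMoment lam (ω₁ s) (ω₂ s) (ω₃ s) (x₁ s) (x₂ s) (x₃ s))
      (τ₁ * x₁ t + τ₂ * x₂ t + τ₃ * x₃ t) t := by
  obtain ⟨hx₁, hx₂, hx₃⟩ := hx
  exact ((((hω₁.const_mul 2).mul hx₁).add ((hω₂.const_mul 2).mul hx₂)).add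
    ((hω₃.add_const lam).mul hx₃)).congr_deriv (by ring)

end PoissonEqAt

theorem stmt12 (a b lam : ℝ) (ω₁ ω₂ ω₃ α₁ α₂ α₃ β₁ β₂ β₃ : ℝ → ℝ)
    (h1 : ∀ t, HasDerivAt ω₁ ((ω₂ t * (ω₃ t - lam) + β₃ t) / 2) t)
    (h2 : ∀ t, HasDerivAt ω₂ ((-(ω₁ t * (ω₃ t - lam)) - α₃ t) / 2) t)
    (h3 : ∀ t, HasDerivAt ω₃ (α₂ t - β₁ t) t)
    (h4 : ∀ t, HasDerivAt α₁ (α₂ t * ω₃ t - α₃ t * ω₂ t) t)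
    (h5 : ∀ t, HasDerivAt α₂ (α₃ t * ω₁ t - α₁ t * ω₃ t) t)
    (h6 : ∀ t, HasDerivAt α₃ (α₁ t * ω₂ t - α₂ t * ω₁ t) t)
    (h7 : ∀ t, HasDerivAt β₁ (β₂ t * ω₃ t - β₃ t * ω₂ t) t)
    (h8 : ∀ t, HasDerivAt β₂ (β₃ t * ω₁ t - β₁ t * ω₃ t) t)
    (h9 : ∀ t, HasDerivAt β₃ (β₁ t * ω₂ t - β₂ t * ω₁ t) t)
    (hca : ∀ t, α₁ t ^ 2 + α₂ t ^ 2 + α₃ t ^ 2 = a ^ 2)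
    (hcb : ∀ t, β₁ t ^ 2 + β₂ t ^ 2 + β₃ t ^ 2 = b ^ 2)
    (hcab : ∀ t, α₁ t * β₁ t + α₂ t * β₂ t + α₃ t * β₃ t = 0) :
    ∀ t, HasDerivAt
      (fun t =>
        (1 / 4) * ((2 * ω₁ t * α₁ t + 2 * ω₂ t * α₂ t + (ω₃ t + lam) * α₃ t) ^ 2 +
          (2 * ω₁ t * β₁ t + 2 * ω₂ t * β₂ t + (ω₃ t + lam) * β₃ t) ^ 2) +
        (1 / 2) * (ω₃ t - lam) *
          (2 * ω₁ t * (α₂ t * β₃ t - α₃ t * β₂ t) +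
           2 * ω₂ t * (α₃ t * β₁ t - α₁ t * β₃ t) +
           (ω₃ t + lam) * (α₁ t * β₂ t - α₂ t * β₁ t)) -
        b ^ 2 * α₁ t - a ^ 2 * β₂ t) 0 t := by
  intro t
  have hα : PoissonEqAt ω₁ ω₂ ω₃ α₁ α₂ α₃ t := ⟨h4 t, h5 t, h6 t⟩
  have hβ : PoissonEqAt ω₁ ω₂ ω₃ β₁ β₂ β₃ t := ⟨h7 t, h8 t, h9 t⟩
  have hω₂ : HasDerivAt ω₂ ((-(ω₁ t * (ω₃ t - lam)) + -α₃ t) / 2) t :=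
    (h2 t).congr_deriv (by ring)
  have hMα := hα.hasDerivAt_gyrostatMoment (h1 t) hω₂ (h3 t)
  have hMβ := hβ.hasDerivAt_gyrostatMoment (h1 t) hω₂ (h3 t)
  have hMγ := (hα.cross hβ).hasDerivAt_gyrostatMoment (h1 t) hω₂ (h3 t)
  refine ((((((hMα.pow 2).add (hMβ.pow 2)).const_mul (1 / 4)).add
    ((((h3 t).sub_const lam).const_mul (1 / 2)).mul hMγ)).sub ((h4 t).const_mul (b ^ 2))).sub
      ((h8 t).const_mul (a ^ 2))).congr_deriv ?_
  simp only [gyrostatMoment]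
  -- The coefficients are `β̇₂`, `α̇₁` and `-(α̇₂ + β̇₁)`: on the level set, `G` agrees with
  -- `G - β₂ (|α|² - a²) - α₁ (|β|² - b²) + (α₂ + β₁) α · β`, a first integral of the whole system.
  linear_combination (β₃ t * ω₁ t - β₁ t * ω₃ t) * hca t +
    (α₂ t * ω₃ t - α₃ t * ω₂ t) * hcb t -
    (α₃ t * ω₁ t - α₁ t * ω₃ t + β₂ t * ω₃ t - β₃ t * ω₂ t) * hcab t
end
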